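/- arXiv:1811.12345 — 2 statements merged into one kernel-verified Lean document; each statement's English description precedes it below -/
import Mathlib

section
/- Let X_1,…,X_M with X_m ∈ ℝ^{D_m×N} be matrices such that each X_m X_mᵀ is invertible, let L ∈ ℝ^{N×N} be symmetric, and let γ ≥ 0. Define C = Σ_{m=1}^M X_mᵀ (X_m X_mᵀ)^{-1} X_m − γ L with eigenvalues λ_1 ≥ … ≥ λ_N. Then the minimum of Σ_{m=1}^M ‖U_mᵀ X_m − S‖_F² + γ Tr(S L Sᵀ) over all U_m ∈ ℝ^{D_m×d} and all S ∈ ℝ^{d×N} with S Sᵀ = I_d equals M·d − Σ_{i=1}^d λ_i. -/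
open Matrix BigOperators

/-!
For fixed `S`, each residual `Uₘᵀ Xₘ - S` splits orthogonally into `(Uₘ - Uₘ*)ᵀ Xₘ`, with
`Uₘ* = (Xₘ Xₘᵀ)⁻¹ Xₘ Sᵀ`, and `S (1 - Pₘ)`, where `Pₘ = Xₘᵀ (Xₘ Xₘᵀ)⁻¹ Xₘ` is the orthogonal
projection onto the row space of `Xₘ`. Hence the objective equals a nonnegative term vanishing at
`Uₘ = Uₘ*`, plus `M d - Tr(S C Sᵀ)`, and it remains to maximise `Tr(S C Sᵀ)` subject to `S Sᵀ = I`.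
In the eigenbasis of `C` this trace is `∑ λᵢ wᵢ`, with `wᵢ` the diagonal of the projection `QᵀQ`,
`Q = S Vᵀ`; so `0 ≤ wᵢ ≤ 1` and `∑ wᵢ = d`, which bounds the sum by `λ₁ + ⋯ + λ_d` (Ky Fan).
Equality holds when the rows of `S` are the top `d` eigenvectors.
-/

/-- Squared Frobenius norm of a real matrix: `‖A‖_F² = ∑ᵢ ∑ⱼ Aᵢⱼ²`. -/
noncomputable def frobSq {m n : Type*} [Fintype m] [Fintype n]
    (A : Matrix m n ℝ) : ℝ :=
  ∑ i, ∑ j, (A i j) ^ 2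

section Frobenius

variable {m n : Type*} [Fintype m] [Fintype n]

lemma frobSq_eq_trace (A : Matrix m n ℝ) : frobSq A = (A * Aᵀ).trace := by
  simp [frobSq, trace, mul_apply, sq]

lemma frobSq_nonneg (A : Matrix m n ℝ) : 0 ≤ frobSq A :=
  Finset.sum_nonneg fun _ _ => Finset.sum_nonneg fun _ _ => sq_nonneg _

lemma frobSq_sub_of_mul_transpose_eq_zero {A B : Matrix m n ℝ} (h : A * Bᵀ = 0) :
    frobSq (A - B) = frobSq A + frobSq B := by
  have h' : B * Aᵀ = 0 := by simpa using congrArg transpose h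
  simp only [frobSq_eq_trace, transpose_sub, Matrix.sub_mul, Matrix.mul_sub, h, h', trace_sub,
    trace_zero]
  ring

lemma frobSq_sub_mul_of_isSymm_of_isIdempotentElem (S : Matrix m n ℝ) {P : Matrix n n ℝ}
    (hPT : P.IsSymm) (hPP : IsIdempotentElem P) :
    frobSq (S - S * P) = (S * Sᵀ).trace - (S * P * Sᵀ).trace := by
  simp only [frobSq_eq_trace, transpose_sub, transpose_mul, hPT.eq, Matrix.sub_mul, Matrix.mul_sub,
    ← Matrix.mul_assoc, trace_sub]
  rw [Matrix.mul_assoc S P P, hPP.eq]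
  ring

end Frobenius

section RowProjection

variable {k n r : Type*} [Fintype k] [Fintype n] [Fintype r] [DecidableEq k]

noncomputable def rowProj (X : Matrix k n ℝ) : Matrix n n ℝ := Xᵀ * (X * Xᵀ)⁻¹ * X

variable {X : Matrix k n ℝ}

lemma transpose_inv_mul_transpose_self : ((X * Xᵀ)⁻¹)ᵀ = (X * Xᵀ)⁻¹ := by
  rw [transpose_nonsing_inv, transpose_mul, transpose_transpose]

lemma isSymm_rowProj : (rowProj X).IsSymm := by
  simp only [IsSymm, rowProj, transpose_mul, transpose_transpose, transpose_inv_mul_transpose_self,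
    Matrix.mul_assoc]

lemma mul_rowProj (hX : IsUnit (X * Xᵀ)) : X * rowProj X = X := by
  rw [rowProj, ← Matrix.mul_assoc, ← Matrix.mul_assoc,
    mul_nonsing_inv _ ((isUnit_iff_isUnit_det _).1 hX), Matrix.one_mul]

lemma isIdempotentElem_rowProj (hX : IsUnit (X * Xᵀ)) : IsIdempotentElem (rowProj X) := by
  unfold IsIdempotentElem
  nth_rewrite 1 [rowProj]
  rw [Matrix.mul_assoc, mul_rowProj hX, rowProj]

lemma frobSq_transpose_mul_sub (hX : IsUnit (X * Xᵀ)) (U : Matrix k r ℝ) (S : Matrix r n ℝ) :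
    frobSq (Uᵀ * X - S) = frobSq ((U - (X * Xᵀ)⁻¹ * X * Sᵀ)ᵀ * X)
      + (S * Sᵀ).trace - (S * rowProj X * Sᵀ).trace := by
  have hsplit : Uᵀ * X - S = (U - (X * Xᵀ)⁻¹ * X * Sᵀ)ᵀ * X - (S - S * rowProj X) := by
    simp only [rowProj, transpose_sub, transpose_mul, transpose_transpose,
      transpose_inv_mul_transpose_self, Matrix.sub_mul, Matrix.mul_assoc]
    abel
  have horth : (U - (X * Xᵀ)⁻¹ * X * Sᵀ)ᵀ * X * (S - S * rowProj X)ᵀ = 0 := by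
    simp only [transpose_sub, transpose_mul, isSymm_rowProj.eq, Matrix.mul_sub, Matrix.mul_assoc]
    rw [← Matrix.mul_assoc X (rowProj X), mul_rowProj hX, sub_self]
  rw [hsplit, frobSq_sub_of_mul_transpose_eq_zero horth,
    frobSq_sub_mul_of_isSymm_of_isIdempotentElem S isSymm_rowProj (isIdempotentElem_rowProj hX)]
  ring

lemma sum_frobSq_add_trace_eq {ι : Type*} [Fintype ι] {k : ι → Type*} [∀ i, Fintype (k i)]
    [∀ i, DecidableEq (k i)] [DecidableEq r] (X : ∀ i, Matrix (k i) n ℝ)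
    (hX : ∀ i, IsUnit (X i * (X i)ᵀ)) (L : Matrix n n ℝ) (γ : ℝ) (U : ∀ i, Matrix (k i) r ℝ)
    {S : Matrix r n ℝ} (hS : S * Sᵀ = 1) :
    (∑ i, frobSq ((U i)ᵀ * X i - S)) + γ * (S * L * Sᵀ).trace
      = (∑ i, frobSq ((U i - (X i * (X i)ᵀ)⁻¹ * X i * Sᵀ)ᵀ * X i))
        + Fintype.card ι * Fintype.card r - (S * ((∑ i, rowProj (X i)) - γ • L) * Sᵀ).trace := by
  simp only [frobSq_transpose_mul_sub (hX _), hS, trace_one, Matrix.mul_sub, Matrix.sub_mul,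
    Matrix.mul_sum, Matrix.sum_mul, trace_sub, trace_sum, Matrix.mul_smul, Matrix.smul_mul,
    trace_smul, smul_eq_mul, Finset.sum_add_distrib, Finset.sum_sub_distrib, Finset.sum_const,
    Finset.card_univ, nsmul_eq_mul]
  ring

end RowProjection

lemma sum_mul_le_sum_of_threshold {ι : Type*} [Fintype ι] (T : Finset ι) {lam w : ι → ℝ} {c : ℝ}
    (hT : ∀ i ∈ T, c ≤ lam i) (hTc : ∀ i ∉ T, lam i ≤ c) (hw0 : ∀ i, 0 ≤ w i)
    (hw1 : ∀ i, w i ≤ 1) (hsum : ∑ i, w i = T.card) :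
    ∑ i, lam i * w i ≤ ∑ i ∈ T, lam i := by
  classical
  have hdiff : ∑ i, lam i * w i - ∑ i ∈ T, lam i
      = ∑ i, (lam i - c) * (w i - if i ∈ T then 1 else 0) := by
    simp only [sub_mul, mul_sub, Finset.sum_sub_distrib, mul_ite, mul_one, mul_zero,
      Finset.sum_ite_mem, Finset.univ_inter, ← Finset.mul_sum, hsum, Finset.sum_const,
      nsmul_eq_mul]
    ring
  have hterm : ∀ i, (lam i - c) * (w i - if i ∈ T then 1 else 0) ≤ 0 := by
    intro i
    by_cases hi : i ∈ T
    · rw [if_pos hi]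
      exact mul_nonpos_of_nonneg_of_nonpos (sub_nonneg.2 (hT i hi)) (sub_nonpos.2 (hw1 i))
    · rw [if_neg hi, sub_zero]
      exact mul_nonpos_of_nonpos_of_nonneg (sub_nonpos.2 (hTc i hi)) (hw0 i)
  linarith [Finset.sum_nonpos fun i (_ : i ∈ Finset.univ) => hterm i]

lemma sum_mul_le_sum_castLE_of_antitone {N d : ℕ} (hd : d ≤ N) {lam w : Fin N → ℝ}
    (hlam : Antitone lam) (hw0 : ∀ i, 0 ≤ w i) (hw1 : ∀ i, w i ≤ 1) (hsum : ∑ i, w i = d) :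
    ∑ i, lam i * w i ≤ ∑ i : Fin d, lam (Fin.castLE hd i) := by
  set T := Finset.univ.map (Fin.castLEEmb hd)
  have hmem : ∀ i, i ∈ T ↔ (i : ℕ) < d := fun i => by
    simp [T, ← Set.mem_range, Fin.range_castLE]
  obtain ⟨c, hcT, hcTc⟩ : ∃ c, (∀ i ∈ T, c ≤ lam i) ∧ (∀ i ∉ T, lam i ≤ c) := by
    rcases Nat.eq_zero_or_pos d with rfl | hd0
    · obtain ⟨c, hc⟩ := Finite.bddAbove_range lam
      exact ⟨c, by simp [hmem], fun i _ => hc ⟨i, rfl⟩⟩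
    · exact ⟨lam ⟨d - 1, by omega⟩, fun i hi => hlam (Fin.le_def.2 (by grind)),
        fun i hi => hlam (Fin.le_def.2 (by grind))⟩
  have := sum_mul_le_sum_of_threshold T hcT hcTc hw0 hw1 (by simpa [T] using hsum)
  simpa [T, Finset.sum_map] using this

section Spectral

variable {n : Type*} [Fintype n]

lemma of_mul_transpose_of_orthonormal {κ : Type*} [DecidableEq κ] {V : κ → n → ℝ}
    (horth : ∀ i j, V i ⬝ᵥ V j = if i = j then 1 else 0) : of V * (of V)ᵀ = 1 := by
  ext i j
  simpa [mul_apply, dotProduct, one_apply] using horth i j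

lemma trace_of_mul_mul_transpose_of_eigenvectors {κ : Type*} [Fintype κ] {C : Matrix n n ℝ}
    {lam : κ → ℝ} {V : κ → n → ℝ} (hnorm : ∀ i, V i ⬝ᵥ V i = 1)
    (heig : ∀ i, C *ᵥ V i = lam i • V i) :
    (of V * C * (of V)ᵀ).trace = ∑ i, lam i := by
  refine Finset.sum_congr rfl fun i _ => ?_
  have hdiag : (of V * C * (of V)ᵀ) i i = V i ⬝ᵥ (C *ᵥ V i) := by
    simp only [mul_apply', dotProduct_mulVec, transpose_apply, of_apply]
    rfl
  rw [diag_apply, hdiag, heig, dotProduct_smul, hnorm, smul_eq_mul, mul_one]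

variable [DecidableEq n]

lemma eq_transpose_mul_diagonal_mul_of_eigenvectors {C : Matrix n n ℝ} {lam : n → ℝ}
    {V : n → n → ℝ} (horth : ∀ i j, V i ⬝ᵥ V j = if i = j then 1 else 0)
    (heig : ∀ i, C *ᵥ V i = lam i • V i) :
    C = (of V)ᵀ * diagonal lam * of V := by
  have hCV : C * (of V)ᵀ = (of V)ᵀ * diagonal lam := by
    ext i j
    rw [mul_diagonal, mul_apply]
    simpa [mulVec, dotProduct, mul_comm] using congrFun (heig j) i
  rw [← hCV, Matrix.mul_assoc, mul_eq_one_comm.1 (of_mul_transpose_of_orthonormal horth),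
    Matrix.mul_one]

variable {r : Type*} [Fintype r]

lemma trace_mul_diagonal_mul_transpose (Q : Matrix r n ℝ) (lam : n → ℝ) :
    (Q * diagonal lam * Qᵀ).trace = ∑ i, lam i * (Qᵀ * Q) i i := by
  rw [trace_mul_cycle]
  exact Finset.sum_congr rfl fun i _ => by simp [mul_diagonal, mul_comm]

omit [Fintype n] [DecidableEq n] in
lemma diag_transpose_mul_self_nonneg (Q : Matrix r n ℝ) (i : n) : 0 ≤ (Qᵀ * Q) i i := by
  rw [mul_apply]
  exact Finset.sum_nonneg fun k _ => mul_self_nonneg (Q k i)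

omit [DecidableEq n] in
lemma diag_transpose_mul_self_le_one [DecidableEq r] {Q : Matrix r n ℝ} (hQ : Q * Qᵀ = 1)
    (i : n) : (Qᵀ * Q) i i ≤ 1 := by
  set P := Qᵀ * Q
  have hPT : Pᵀ = P := by rw [transpose_mul, transpose_transpose]
  have hPP : P * P = P := by
    rw [Matrix.mul_assoc, ← Matrix.mul_assoc Q, hQ, Matrix.one_mul]
  have hsq : P i i ^ 2 ≤ P i i := calc
    P i i ^ 2 ≤ ∑ k, P i k ^ 2 :=
      Finset.single_le_sum (f := fun k => P i k ^ 2) (fun k _ => sq_nonneg _) (Finset.mem_univ i)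
    _ = (P * P) i i := by
      rw [mul_apply]
      refine Finset.sum_congr rfl fun k _ => ?_
      rw [sq, ← transpose_apply P k i, hPT]
    _ = P i i := by rw [hPP]
  nlinarith [diag_transpose_mul_self_nonneg Q i]

omit [DecidableEq n] in
lemma sum_diag_transpose_mul_self [DecidableEq r] {Q : Matrix r n ℝ} (hQ : Q * Qᵀ = 1) :
    ∑ i, (Qᵀ * Q) i i = Fintype.card r := by
  change (Qᵀ * Q).trace = _
  rw [trace_mul_comm, hQ, trace_one]

end Spectral

lemma trace_mul_mul_transpose_le_sum_castLE {N d : ℕ} (hd : d ≤ N)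
    {C : Matrix (Fin N) (Fin N) ℝ} {lam : Fin N → ℝ} (hlam : Antitone lam)
    {V : Fin N → Fin N → ℝ} (horth : ∀ i j, V i ⬝ᵥ V j = if i = j then 1 else 0)
    (heig : ∀ i, C *ᵥ V i = lam i • V i) {S : Matrix (Fin d) (Fin N) ℝ} (hS : S * Sᵀ = 1) :
    (S * C * Sᵀ).trace ≤ ∑ i : Fin d, lam (Fin.castLE hd i) := by
  set Q := S * (of V)ᵀ
  have hQ : Q * Qᵀ = 1 := by
    rw [transpose_mul, transpose_transpose, Matrix.mul_assoc, ← Matrix.mul_assoc (of V)ᵀ,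
      mul_eq_one_comm.1 (of_mul_transpose_of_orthonormal horth), Matrix.one_mul, hS]
  have hC : S * C * Sᵀ = Q * diagonal lam * Qᵀ := by
    rw [eq_transpose_mul_diagonal_mul_of_eigenvectors horth heig]
    simp only [Q, transpose_mul, transpose_transpose, Matrix.mul_assoc]
  rw [hC, trace_mul_diagonal_mul_transpose]
  exact sum_mul_le_sum_castLE_of_antitone hd hlam (diag_transpose_mul_self_nonneg Q)
    (diag_transpose_mul_self_le_one hQ) (by rw [sum_diag_transpose_mul_self hQ, Fintype.card_fin])

theorem gmcca_optimal_value_general {M N d : ℕ} (hd : d ≤ N) (Dm : Fin M → ℕ)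
    (X : ∀ m, Matrix (Fin (Dm m)) (Fin N) ℝ)
    (hX : ∀ m, IsUnit (X m * (X m)ᵀ))
    (L : Matrix (Fin N) (Fin N) ℝ)
    (γ : ℝ)
    (C : Matrix (Fin N) (Fin N) ℝ)
    (hCdef : C = (∑ m, (X m)ᵀ * (X m * (X m)ᵀ)⁻¹ * X m) - γ • L)
    (lam : Fin N → ℝ) (hlam : Antitone lam)
    (V : Fin N → (Fin N → ℝ))
    (horth : ∀ i j, V i ⬝ᵥ V j = if i = j then (1 : ℝ) else 0)
    (heig : ∀ i, C *ᵥ V i = lam i • V i) :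
    IsLeast
      {t : ℝ | ∃ (U : ∀ m, Matrix (Fin (Dm m)) (Fin d) ℝ)
          (S : Matrix (Fin d) (Fin N) ℝ), S * Sᵀ = 1 ∧
          t = (∑ m, frobSq ((U m)ᵀ * X m - S)) + γ * (S * L * Sᵀ).trace}
      ((M : ℝ) * (d : ℝ) - ∑ i : Fin d, lam (Fin.castLE hd i)) := by
  have hobj : ∀ (U : ∀ m, Matrix (Fin (Dm m)) (Fin d) ℝ) (S : Matrix (Fin d) (Fin N) ℝ),
      S * Sᵀ = 1 → (∑ m, frobSq ((U m)ᵀ * X m - S)) + γ * (S * L * Sᵀ).trace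
        = (∑ m, frobSq ((U m - (X m * (X m)ᵀ)⁻¹ * X m * Sᵀ)ᵀ * X m))
          + M * d - (S * C * Sᵀ).trace := fun U S hS => by
    simpa only [hCdef, Fintype.card_fin, rowProj] using sum_frobSq_add_trace_eq X hX L γ U hS
  constructor
  · set S₀ : Matrix (Fin d) (Fin N) ℝ := of fun i => V (Fin.castLE hd i)
    have hS₀ : S₀ * S₀ᵀ = 1 :=
      of_mul_transpose_of_orthonormal fun i j => by simp [horth, Fin.castLE_inj]
    refine ⟨fun m => (X m * (X m)ᵀ)⁻¹ * X m * S₀ᵀ, S₀, hS₀, ?_⟩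
    rw [hobj _ _ hS₀, trace_of_mul_mul_transpose_of_eigenvectors (by simp [horth])
      fun i => heig _]
    simp [frobSq_eq_trace]
  · rintro t ⟨U, S, hS, rfl⟩
    rw [hobj U S hS]
    have hfit := Finset.sum_nonneg fun m (_ : m ∈ Finset.univ) =>
      frobSq_nonneg ((U m - (X m * (X m)ᵀ)⁻¹ * X m * Sᵀ)ᵀ * X m)
    linarith [trace_mul_mul_transpose_le_sum_castLE hd hlam horth heig hS]

/-- The GMCCA optimum: the minimum of
`∑ₘ ‖Uₘᵀ Xₘ - S‖_F² + γ Tr(S L Sᵀ)` over all loading matrices `Uₘ` and all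
`S ∈ ℝ^{d×N}` with `S Sᵀ = I_d` equals `M d - ∑_{i=1}^d λ_i`, where
`λ_1 ≥ … ≥ λ_N` are the eigenvalues of
`C = ∑ₘ Xₘᵀ (Xₘ Xₘᵀ)⁻¹ Xₘ - γ L` (described by the antitone `lam` together
with an orthonormal family of eigenvectors `V`). -/
theorem gmcca_optimal_value {M N d : ℕ} (hd : d ≤ N) (Dm : Fin M → ℕ)
    (X : ∀ m, Matrix (Fin (Dm m)) (Fin N) ℝ)
    (hX : ∀ m, IsUnit (X m * (X m)ᵀ))
    (L : Matrix (Fin N) (Fin N) ℝ) (hL : L.IsSymm)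
    (γ : ℝ) (hγ : 0 ≤ γ)
    (C : Matrix (Fin N) (Fin N) ℝ)
    (hCdef : C = (∑ m, (X m)ᵀ * (X m * (X m)ᵀ)⁻¹ * X m) - γ • L)
    (lam : Fin N → ℝ) (hlam : Antitone lam)
    (V : Fin N → (Fin N → ℝ))
    (horth : ∀ i j, V i ⬝ᵥ V j = if i = j then (1 : ℝ) else 0)
    (heig : ∀ i, C *ᵥ V i = lam i • V i) :
    IsLeast
      {t : ℝ | ∃ (U : ∀ m, Matrix (Fin (Dm m)) (Fin d) ℝ)
          (S : Matrix (Fin d) (Fin N) ℝ), S * Sᵀ = 1 ∧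
          t = (∑ m, frobSq ((U m)ᵀ * X m - S)) + γ * (S * L * Sᵀ).trace}
      ((M : ℝ) * (d : ℝ) - ∑ i : Fin d, lam (Fin.castLE hd i)) :=
  gmcca_optimal_value_general hd Dm X hX L γ C hCdef lam hlam V horth heig
end

section
/- Let K_1,…,K_M ∈ ℝ^{N×N} be symmetric positive semidefinite matrices, let L ∈ ℝ^{N×N} be symmetric, let γ ≥ 0 and ε > 0, and let S ∈ ℝ^{d×N} satisfy S Sᵀ = I_d. Then the minimum over A_1,…,A_M (with A_m ∈ ℝ^{N×d}) of Σ_{m=1}^M ‖A_mᵀ K_m − S‖_F² + γ Tr(S L Sᵀ) + ε Σ_{m=1}^M Tr(A_mᵀ K_m A_m) equals M·d − Tr(S C_g Sᵀ), where C_g = Σ_{m=1}^M K_m (K_m + εI)^{-1} − γ L, and the minimum is attained at A_m = (K_m + εI)^{-1} Sᵀ for each m. -/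
open Matrix BigOperators

/-!
With `B = K + εI` and `A₀ = B⁻¹ Sᵀ`, the view-wise objective
`‖Aᵀ K - S‖_F² + ε Tr(Aᵀ K A)` equals `Tr(Aᵀ (K B) A) - 2 Tr(Aᵀ K Sᵀ) + Tr(S Sᵀ)`, and since
`(K B) A₀ = K Sᵀ` completing the square gives
`Tr((A - A₀)ᵀ (K B) (A - A₀)) + Tr(S Sᵀ) - Tr(S K B⁻¹ Sᵀ)`.
As `K B = K² + εK` is positive semidefinite, the first term is nonnegative and vanishes at `A₀`.
The objective is a sum of such view-wise terms plus `γ Tr(S L Sᵀ)`, which does not involve `A`.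
-/

namespace Matrix

variable {n k : Type*} [Fintype n] [Fintype k]

lemma trace_transpose_mul_mul_sub {R : Type*} [CommRing R] {P : Matrix n n R} (hP : P.IsSymm)
    (A A₀ : Matrix n k R) :
    ((A - A₀)ᵀ * P * (A - A₀)).trace
      = (Aᵀ * P * A).trace - 2 * (Aᵀ * P * A₀).trace + (A₀ᵀ * P * A₀).trace := by
  have hcross : (A₀ᵀ * P * A).trace = (Aᵀ * P * A₀).trace := by
    rw [← trace_transpose]
    simp only [transpose_mul, transpose_transpose, hP.eq, Matrix.mul_assoc]
  simp only [transpose_sub, Matrix.sub_mul, Matrix.mul_sub, trace_sub, hcross]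
  ring

lemma isUnit_det_add_smul_one [DecidableEq n] {K : Matrix n n ℝ} (hK : K.PosSemidef) {ε : ℝ}
    (hε : 0 < ε) : IsUnit (K + ε • 1).det :=
  (isUnit_iff_isUnit_det _).mp (PosDef.posSemidef_add hK (PosDef.one.smul hε)).isUnit

lemma posSemidef_mul_add_smul_one [DecidableEq n] {K : Matrix n n ℝ} (hK : K.PosSemidef)
    {ε : ℝ} (hε : 0 ≤ ε) : (K * (K + ε • 1)).PosSemidef := by
  have hKK : (K * K).PosSemidef := by
    simpa only [hK.isHermitian.eq] using posSemidef_self_mul_conjTranspose K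
  simpa [Matrix.mul_add] using hKK.add (hK.smul hε)

end Matrix

section RidgeObjective

variable {n k : Type*} [Fintype n] [Fintype k]

lemma frobSq_eq_trace_mul_transpose (A : Matrix k n ℝ) : frobSq A = (A * Aᵀ).trace := by
  simp [frobSq, trace, mul_apply, sq]

noncomputable def ridgeObjective (K : Matrix n n ℝ) (ε : ℝ) (S : Matrix k n ℝ)
    (A : Matrix n k ℝ) : ℝ :=
  frobSq (Aᵀ * K - S) + ε * (Aᵀ * K * A).trace

lemma ridgeObjective_eq_trace [DecidableEq n] {K : Matrix n n ℝ} (hK : K.IsSymm) (ε : ℝ)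
    (S : Matrix k n ℝ) (A : Matrix n k ℝ) :
    ridgeObjective K ε S A
      = (Aᵀ * (K * (K + ε • 1)) * A).trace - 2 * (Aᵀ * K * Sᵀ).trace + (S * Sᵀ).trace := by
  have hcross : (S * (K * A)).trace = (Aᵀ * K * Sᵀ).trace := by
    rw [← trace_transpose]
    simp only [transpose_mul, hK.eq, Matrix.mul_assoc]
  simp only [ridgeObjective, frobSq_eq_trace_mul_transpose, transpose_sub, transpose_mul,
    transpose_transpose, hK.eq, Matrix.sub_mul, Matrix.mul_sub, Matrix.mul_add, Matrix.add_mul,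
    Matrix.mul_smul, Matrix.smul_mul, Matrix.mul_one, trace_sub, trace_add, trace_smul,
    smul_eq_mul, Matrix.mul_assoc, hcross]
  ring

lemma ridgeObjective_eq_complete_square [DecidableEq n] {K : Matrix n n ℝ} (hK : K.IsSymm)
    {ε : ℝ} (hB : IsUnit (K + ε • 1).det) (S : Matrix k n ℝ) (A : Matrix n k ℝ) :
    ridgeObjective K ε S A
      = ((A - (K + ε • 1)⁻¹ * Sᵀ)ᵀ * (K * (K + ε • 1)) * (A - (K + ε • 1)⁻¹ * Sᵀ)).trace
        + (S * Sᵀ).trace - (S * (K * (K + ε • 1)⁻¹) * Sᵀ).trace := by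
  set B := K + ε • 1
  have hBsymm : (B⁻¹)ᵀ = B⁻¹ := by
    rw [transpose_nonsing_inv, transpose_add, hK.eq, transpose_smul, transpose_one]
  have hsolve : K * B * (B⁻¹ * Sᵀ) = K * Sᵀ := by
    rw [Matrix.mul_assoc, ← Matrix.mul_assoc B, mul_nonsing_inv B hB, Matrix.one_mul]
  have hvalue : ((B⁻¹ * Sᵀ)ᵀ * (K * B) * (B⁻¹ * Sᵀ)).trace = (S * (K * B⁻¹) * Sᵀ).trace := by
    rw [← trace_transpose, Matrix.mul_assoc _ (K * B), hsolve]
    simp only [transpose_mul, transpose_transpose, hK.eq, hBsymm, Matrix.mul_assoc]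
  have hPsymm : (K * B).IsSymm := by
    simp only [IsSymm, B, transpose_mul, transpose_add, hK.eq, transpose_smul, Matrix.mul_add,
      Matrix.mul_smul, Matrix.mul_one]
  rw [trace_transpose_mul_mul_sub hPsymm, hvalue, Matrix.mul_assoc Aᵀ (K * B) (B⁻¹ * Sᵀ),
    hsolve, ← Matrix.mul_assoc Aᵀ K Sᵀ, ridgeObjective_eq_trace hK]
  ring

lemma ridgeObjective_inv_mul_transpose [DecidableEq n] {K : Matrix n n ℝ} (hK : K.IsSymm)
    {ε : ℝ} (hB : IsUnit (K + ε • 1).det) (S : Matrix k n ℝ) :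
    ridgeObjective K ε S ((K + ε • 1)⁻¹ * Sᵀ)
      = (S * Sᵀ).trace - (S * (K * (K + ε • 1)⁻¹) * Sᵀ).trace := by
  simp [ridgeObjective_eq_complete_square hK hB]

lemma ridgeObjective_inv_mul_transpose_le [DecidableEq n] {K : Matrix n n ℝ}
    (hK : K.PosSemidef) {ε : ℝ} (hε : 0 < ε) (S : Matrix k n ℝ) (A : Matrix n k ℝ) :
    ridgeObjective K ε S ((K + ε • 1)⁻¹ * Sᵀ) ≤ ridgeObjective K ε S A := by
  have hsymm := isHermitian_iff_isSymm.mp hK.isHermitian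
  have hB := isUnit_det_add_smul_one hK hε
  have hgap := ((posSemidef_mul_add_smul_one hK hε.le).conjTranspose_mul_mul_same
    (A - (K + ε • 1)⁻¹ * Sᵀ)).trace_nonneg
  rw [conjTranspose_eq_transpose_of_trivial] at hgap
  rw [ridgeObjective_inv_mul_transpose hsymm hB, ridgeObjective_eq_complete_square hsymm hB]
  linarith

end RidgeObjective

theorem gkmcca_inner_minimization_general {M N d : ℕ}
    (K : Fin M → Matrix (Fin N) (Fin N) ℝ) (hK : ∀ m, (K m).PosSemidef)
    (L : Matrix (Fin N) (Fin N) ℝ)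
    (γ ε : ℝ) (hε : 0 < ε)
    (S : Matrix (Fin d) (Fin N) ℝ) (hS : S * Sᵀ = 1) :
    (∀ A : Fin M → Matrix (Fin N) (Fin d) ℝ,
        (∑ m, frobSq ((((K m + ε • 1)⁻¹ * Sᵀ)ᵀ) * K m - S))
            + γ * (S * L * Sᵀ).trace
            + ε * ∑ m, ((((K m + ε • 1)⁻¹ * Sᵀ)ᵀ) * K m
                * ((K m + ε • 1)⁻¹ * Sᵀ)).trace
          ≤ (∑ m, frobSq ((A m)ᵀ * K m - S)) + γ * (S * L * Sᵀ).trace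
            + ε * ∑ m, ((A m)ᵀ * K m * A m).trace) ∧
    (∑ m, frobSq ((((K m + ε • 1)⁻¹ * Sᵀ)ᵀ) * K m - S))
        + γ * (S * L * Sᵀ).trace
        + ε * ∑ m, ((((K m + ε • 1)⁻¹ * Sᵀ)ᵀ) * K m
            * ((K m + ε • 1)⁻¹ * Sᵀ)).trace
      = (M : ℝ) * (d : ℝ)
        - (S * ((∑ m, K m * (K m + ε • 1)⁻¹) - γ • L) * Sᵀ).trace := by
  have hsplit : ∀ A : Fin M → Matrix (Fin N) (Fin d) ℝ,
      (∑ m, frobSq ((A m)ᵀ * K m - S)) + γ * (S * L * Sᵀ).trace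
        + ε * ∑ m, ((A m)ᵀ * K m * A m).trace
      = ∑ m, ridgeObjective (K m) ε S (A m) + γ * (S * L * Sᵀ).trace := by
    intro A
    simp only [ridgeObjective, Finset.sum_add_distrib, Finset.mul_sum]
    ring
  have hA₀ := hsplit fun m => (K m + ε • 1)⁻¹ * Sᵀ
  refine ⟨fun A => ?_, ?_⟩
  · rw [hA₀, hsplit A]
    gcongr with m
    exact ridgeObjective_inv_mul_transpose_le (hK m) hε S (A m)
  · have hsymm m : (K m)ᵀ = K m := by simpa using (hK m).isHermitian.eq
    have hB m := isUnit_det_add_smul_one (hK m) hε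
    simp only [hA₀, ridgeObjective_inv_mul_transpose (hsymm _) (hB _), hS, Matrix.mul_sub,
      Matrix.sub_mul, Matrix.mul_sum, Matrix.sum_mul, Matrix.mul_smul, Matrix.smul_mul,
      trace_sub, trace_sum, trace_smul, trace_one, smul_eq_mul, Finset.sum_sub_distrib,
      Finset.sum_const, Finset.card_univ, Fintype.card_fin, nsmul_eq_mul]
    ring

/-- For fixed `S` with `S Sᵀ = I`, the graph-regularized kernel MCCA objective
`∑ₘ ‖Aₘᵀ Kₘ - S‖_F² + γ Tr(S L Sᵀ) + ε ∑ₘ Tr(Aₘᵀ Kₘ Aₘ)` is minimized over the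
dual matrices at `Aₘ = (Kₘ + εI)⁻¹ Sᵀ`, with minimum value
`M d - Tr(S C_g Sᵀ)`, where `C_g = ∑ₘ Kₘ (Kₘ + εI)⁻¹ - γ L`. -/
theorem gkmcca_inner_minimization {M N d : ℕ}
    (K : Fin M → Matrix (Fin N) (Fin N) ℝ) (hK : ∀ m, (K m).PosSemidef)
    (L : Matrix (Fin N) (Fin N) ℝ) (hL : L.IsSymm)
    (γ ε : ℝ) (hγ : 0 ≤ γ) (hε : 0 < ε)
    (S : Matrix (Fin d) (Fin N) ℝ) (hS : S * Sᵀ = 1) :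
    (∀ A : Fin M → Matrix (Fin N) (Fin d) ℝ,
        (∑ m, frobSq ((((K m + ε • 1)⁻¹ * Sᵀ)ᵀ) * K m - S))
            + γ * (S * L * Sᵀ).trace
            + ε * ∑ m, ((((K m + ε • 1)⁻¹ * Sᵀ)ᵀ) * K m
                * ((K m + ε • 1)⁻¹ * Sᵀ)).trace
          ≤ (∑ m, frobSq ((A m)ᵀ * K m - S)) + γ * (S * L * Sᵀ).trace
            + ε * ∑ m, ((A m)ᵀ * K m * A m).trace) ∧
    (∑ m, frobSq ((((K m + ε • 1)⁻¹ * Sᵀ)ᵀ) * K m - S))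
        + γ * (S * L * Sᵀ).trace
        + ε * ∑ m, ((((K m + ε • 1)⁻¹ * Sᵀ)ᵀ) * K m
            * ((K m + ε • 1)⁻¹ * Sᵀ)).trace
      = (M : ℝ) * (d : ℝ)
        - (S * ((∑ m, K m * (K m + ε • 1)⁻¹) - γ • L) * Sᵀ).trace :=
  gkmcca_inner_minimization_general K hK L γ ε hε S hS
end
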